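/- arXiv:2401.13364 — 4 statements merged into one kernel-verified Lean document; each statement's English description precedes it below -/
import Mathlib

section
/- For every infinite regular cardinal κ and every almost disjoint family E = {e_α : α < 2^κ} of subsets of κ of size κ, there exists a subset A ⊆ 2^κ such that no x ⊆ κ depicts (A,E). Consequently the characteristic ap_κ (the least λ admitting an almost disjoint family of size λ with an indepictable pair) is well-defined and ap_κ ≤ 2^κ. -/
/-!
Counting: a set `x ⊆ κ` depicts exactly one `A`, namely the set of indices `i` with
`|e_i ∩ x| = κ`. So at most `2^κ` sets `A` are depictable, while there are `2^(2^κ)` of them.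
-/

open Cardinal Set
universe u

/-- `x ⊆ κ` depicts the pair `(A, E)`. -/
def Depicts {α : Type*} {ι : Type*} (e : ι → Set α) (A : Set ι) (x : Set α) : Prop :=
  ∀ i : ι, #↥(e i ∩ x) = #α ↔ i ∈ A

section Depicts

variable {α ι : Type u}

def depictedSet (e : ι → Set α) (x : Set α) : Set ι := {i | #↥(e i ∩ x) = #α}

theorem depicts_iff_depictedSet_eq {e : ι → Set α} {A : Set ι} {x : Set α} :
    Depicts e A x ↔ depictedSet e x = A :=
  Set.ext_iff.symm

theorem exists_forall_not_depicts_of_two_pow_lt (e : ι → Set α)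
    (h : (2 : Cardinal) ^ #α < 2 ^ #ι) : ∃ A : Set ι, ∀ x : Set α, ¬ Depicts e A x := by
  by_contra! hall
  have hsurj : Function.Surjective (depictedSet e) := fun A ↦
    (hall A).imp fun _ ↦ depicts_iff_depictedSet_eq.mp
  have hle : #(Set ι) ≤ #(Set α) := mk_le_of_surjective hsurj
  rw [mk_set, mk_set] at hle
  exact hle.not_gt h

end Depicts

theorem exists_indepictable_general {α ι : Type u}
    (hι : #ι = 2 ^ #α)
    (e : ι → Set α) :
    ∃ A : Set ι, ∀ x : Set α, ¬ Depicts e A x :=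
  exists_forall_not_depicts_of_two_pow_lt e (hι ▸ cantor _)

/-- For every infinite regular `κ` and every almost disjoint family
`E = {e_α : α < 2^κ}` of subsets of `κ` of size `κ`, there is `A ⊆ 2^κ` such that no
`x ⊆ κ` depicts `(A,E)`.  In particular `ap_κ` is well-defined and `ap_κ ≤ 2^κ`. -/
theorem exists_indepictable {α ι : Type u}
    [Infinite α] (hreg : (#α).IsRegular)
    (hι : #ι = 2 ^ #α)
    (e : ι → Set α)
    (hsize : ∀ i : ι, #↥(e i) = #α)
    (had : ∀ i j : ι, i ≠ j → #↥(e i ∩ e j) < #α) :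
    ∃ A : Set ι, ∀ x : Set α, ¬ Depicts e A x :=
  exists_indepictable_general hι e
end

section
/- Every κ⁺-complete κ⁺-dense ideal over κ⁺ is Laver, i.e., (κ⁺⁺, κ⁺⁺, κ)-saturated: for every family {B_δ : δ < κ⁺⁺} of J-positive sets there is a subfamily of size κ⁺⁺ such that every subcollection of at most κ of its members has J-positive intersection. -/
open Cardinal Set

universe u

/-
For each `B δ` pick a dense set `a` with `a \ B δ ∈ J`. There are only `κ⁺` dense sets and
`κ⁺⁺` is regular, so one `a` is picked for `κ⁺⁺` many `δ`. For at most `κ` of those `δ`,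
`a` is covered by `⋂ B δ` together with the `≤ κ` null sets `a \ B δ`; as `a` is positive,
so is the intersection.
-/

section IdealFacts

variable {α : Type u} {J : Set (Set α)} {κ : Cardinal.{u}}

theorem union_mem_of_complete (hcomplete : ∀ S : Set (Set α), S ⊆ J → #↥S ≤ κ → ⋃₀ S ∈ J)
    (hκ : 2 ≤ κ) {s t : Set α} (hs : s ∈ J) (ht : t ∈ J) : s ∪ t ∈ J := by
  rw [← sUnion_pair]
  refine hcomplete _ (by rintro _ (rfl | rfl) <;> assumption) (le_trans ?_ hκ)
  exact mk_insert_le.trans (by simp only [mk_singleton]; norm_num)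

theorem biInter_notMem_of_sdiff_mem {ι : Type u} (hdown : ∀ s ∈ J, ∀ t ⊆ s, t ∈ J)
    (hcomplete : ∀ S : Set (Set α), S ⊆ J → #↥S ≤ κ → ⋃₀ S ∈ J) (hκ : 2 ≤ κ)
    {B : ι → Set α} {a : Set α} (ha : a ∉ J) {C : Set ι} (hC : #↥C ≤ κ)
    (hsdiff : ∀ δ ∈ C, a \ B δ ∈ J) : (⋂ δ ∈ C, B δ) ∉ J := by
  intro hinter
  have hsdiffs : ⋃₀ ((fun δ => a \ B δ) '' C) ∈ J :=
    hcomplete _ (by rintro _ ⟨δ, hδ, rfl⟩; exact hsdiff δ hδ) (mk_image_le.trans hC)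
  have hcover : a ⊆ (⋂ δ ∈ C, B δ) ∪ ⋃₀ ((fun δ => a \ B δ) '' C) := by
    intro x hx
    by_cases hxB : ∀ δ ∈ C, x ∈ B δ
    · exact Or.inl (mem_iInter₂.2 hxB)
    · push Not at hxB
      obtain ⟨δ, hδ, hxδ⟩ := hxB
      exact Or.inr ⟨a \ B δ, ⟨δ, hδ, rfl⟩, hx, hxδ⟩
  exact ha (hdown _ (union_mem_of_complete hcomplete hκ hinter hsdiffs) a hcover)

end IdealFacts

theorem exists_fiber_mk_eq_of_isRegular {ι β : Type u} (hι : (#ι).IsRegular) (hβ : #β < #ι)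
    (g : ι → β) : ∃ b : β, #↥(g ⁻¹' {b}) = #ι :=
  infinite_pigeonhole g hι.aleph0_le (hι.cof_ord.symm ▸ hβ)

theorem dense_ideal_is_laver_general {α ι : Type u} (κ : Cardinal.{u})
    (hκ : ℵ₀ ≤ κ)
    (hι : #ι = Order.succ (Order.succ κ))
    (J : Set (Set α))
    -- ideal: downward closed
    (hdown : ∀ s ∈ J, ∀ t ⊆ s, t ∈ J)
    -- κ⁺-complete: unions of fewer than κ⁺ (i.e. at most κ) members of J lie in J
    (hcomplete : ∀ S : Set (Set α), S ⊆ J → #↥S ≤ κ → ⋃₀ S ∈ J)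
    -- κ⁺-dense: a family of κ⁺-many J-positive sets dense in J⁺
    (hdense : ∃ A : Set (Set α), #↥A ≤ Order.succ κ ∧ (∀ a ∈ A, a ∉ J) ∧
      ∀ B : Set α, B ∉ J → ∃ a ∈ A, a \ B ∈ J)
    (B : ι → Set α) (hB : ∀ δ : ι, B δ ∉ J) :
    -- Laver: a subfamily of size κ⁺⁺ all of whose ≤κ-sized subcollections have
    -- J-positive intersection
    ∃ T : Set ι, #↥T = Order.succ (Order.succ κ) ∧
      ∀ C : Set ι, C ⊆ T → #↥C ≤ κ → (⋂ δ ∈ C, B δ) ∉ J := by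
  obtain ⟨A, hAcard, hApos, hAdense⟩ := hdense
  choose f hfA hfJ using fun δ => hAdense (B δ) (hB δ)
  have hreg : (#ι).IsRegular := hι ▸ isRegular_succ (hκ.trans (Order.le_succ κ))
  have hAlt : #↥A < #ι := hι ▸ hAcard.trans_lt (Order.lt_succ _)
  obtain ⟨a, ha⟩ := exists_fiber_mk_eq_of_isRegular hreg hAlt fun δ => (⟨f δ, hfA δ⟩ : A)
  refine ⟨_, ha.trans hι, fun C hC hCκ => ?_⟩
  have h2κ : (2 : Cardinal) ≤ κ := (natCast_lt_aleph0 (n := 2)).le.trans hκ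
  refine biInter_notMem_of_sdiff_mem hdown hcomplete h2κ (hApos a a.2) hCκ fun δ hδ => ?_
  have hfa : f δ = a := congrArg Subtype.val (hC hδ)
  exact hfa ▸ hfJ δ

/-- Every `κ⁺`-complete `κ⁺`-dense ideal over `κ⁺` is Laver, i.e.
`(κ⁺⁺, κ⁺⁺, κ)`-saturated.  Here `α` is a set of size `κ⁺`, `J ⊆ P(α)` is the ideal,
and the family `{B_δ : δ < κ⁺⁺}` is indexed by a type `ι` of size `κ⁺⁺`. -/
theorem dense_ideal_is_laver {α ι : Type u} (κ : Cardinal.{u})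
    (hκ : ℵ₀ ≤ κ)
    (hα : #α = Order.succ κ)
    (hι : #ι = Order.succ (Order.succ κ))
    (J : Set (Set α))
    -- ideal: downward closed
    (hdown : ∀ s ∈ J, ∀ t ⊆ s, t ∈ J)
    -- κ⁺-complete: unions of fewer than κ⁺ (i.e. at most κ) members of J lie in J
    (hcomplete : ∀ S : Set (Set α), S ⊆ J → #↥S ≤ κ → ⋃₀ S ∈ J)
    -- κ⁺-dense: a family of κ⁺-many J-positive sets dense in J⁺
    (hdense : ∃ A : Set (Set α), #↥A ≤ Order.succ κ ∧ (∀ a ∈ A, a ∉ J) ∧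
      ∀ B : Set α, B ∉ J → ∃ a ∈ A, a \ B ∈ J)
    (B : ι → Set α) (hB : ∀ δ : ι, B δ ∉ J) :
    -- Laver: a subfamily of size κ⁺⁺ all of whose ≤κ-sized subcollections have
    -- J-positive intersection
    ∃ T : Set ι, #↥T = Order.succ (Order.succ κ) ∧
      ∀ C : Set ι, C ⊆ T → #↥C ≤ κ → (⋂ δ ∈ C, B δ) ∉ J :=
  dense_ideal_is_laver_general κ hκ hι J hdown hcomplete hdense B hB
end

section
/- Assume ap_{ℵ₁} > ℵ₂, I is an ℵ₂-complete ideal over ω₂, the quotient P(ω₂)/I is not θ-dense, and {A_α : α < θ} ⊆ I⁺. Then (fixing an almost disjoint family {e_γ : γ < ω₂} ⊆ [ω₁]^{ω₁}) there exist x ⊆ ω₁ and η < ω₁ such that F^η_x ∈ I⁺ and for every α < θ there is ζ < ω₁ with E^η_{x∩ζ} ∩ A_α ∈ I⁺. -/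
open Cardinal Set

universe u

/-- The order type of a set of ordinals. -/
noncomputable def otp (s : Set Ordinal) : Ordinal :=
  Ordinal.type ((· < ·) : s → s → Prop)

/-- `E^η_x = {γ < ω₂ : otp(e_γ ∩ x) ≥ η}`. -/
noncomputable def Eset (e : Ordinal → Set Ordinal) (η : Ordinal) (x : Set Ordinal) :
    Set Ordinal :=
  {γ | γ < (Cardinal.aleph 2).ord ∧ η ≤ otp (e γ ∩ x)}

/-- `F^η_x = ω₂ \ E^η_x`. -/
noncomputable def Fset (e : Ordinal → Set Ordinal) (η : Ordinal) (x : Set Ordinal) :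
    Set Ordinal :=
  {γ | γ < (Cardinal.aleph 2).ord ∧ ¬ η ≤ otp (e γ ∩ x)}

lemma otp_mono {s t : Set Ordinal} (h : s ⊆ t) : otp s ≤ otp t := by
  refine RelEmbedding.ordinal_type_le ⟨⟨Set.inclusion h, Set.inclusion_injective h⟩, Iff.rfl⟩

lemma card_otp (s : Set Ordinal) : (otp s).card = #s := Ordinal.card_type _

lemma otp_exists_seg {s : Set Ordinal} (hs : s ⊆ Set.Iio (Cardinal.aleph 1).ord)
    (hcard : #s = Cardinal.aleph 1) {η : Ordinal} (hη : η < (Cardinal.aleph 1).ord) :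
    ∃ ζ < (Cardinal.aleph 1).ord, η ≤ otp (s ∩ Set.Iio ζ) := by
  have hlt : η < otp s := by
    refine lt_of_lt_of_le hη ?_
    rw [Cardinal.ord_le, card_otp, hcard]
  obtain ⟨a, ha⟩ := Ordinal.typein_surj ((· < ·) : s → s → Prop) hlt
  refine ⟨a.1 + 1, ?_, ?_⟩
  · rw [Ordinal.add_one_eq_succ]
    exact (Cardinal.isSuccLimit_ord (Cardinal.aleph0_le_aleph 1)).succ_lt (hs a.2)
  · rw [← ha, ← Ordinal.type_subrel]
    refine RelEmbedding.ordinal_type_le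
      ⟨⟨fun b => ⟨b.1.1, b.1.2, lt_of_lt_of_le (show (b.1.1 : Ordinal) < a.1 from b.2) le_self_add⟩, ?_⟩, Iff.rfl⟩
    intro b c hbc
    have h3 := congrArg (fun z : ↥(s ∩ Set.Iio ((a : Ordinal) + 1)) => (z : Ordinal)) hbc
    exact Subtype.ext (Subtype.ext h3)

universe v w

open Classical in
noncomputable def trf : Ordinal.{v} → Ordinal.{w} := fun o =>
  if h : ∃ p : Ordinal.{w}, Ordinal.lift.{v} p = Ordinal.lift.{w} o then h.choose else 0

lemma trf_lift {o : Ordinal.{v}}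
    (h : ∃ p : Ordinal.{w}, Ordinal.lift.{v} p = Ordinal.lift.{w} o) :
    Ordinal.lift.{v} (trf.{v, w} o) = Ordinal.lift.{w} o := by
  simp only [trf]
  rw [dif_pos h]
  exact h.choose_spec

lemma lift_ord_aleph_one :
    Ordinal.lift.{w} (Cardinal.aleph (1 : Ordinal.{v})).ord = (Cardinal.aleph 1).ord := by
  rw [Cardinal.lift_ord, Cardinal.lift_aleph, Ordinal.lift_one]

lemma lift_ord_aleph_two :
    Ordinal.lift.{w} (Cardinal.aleph (2 : Ordinal.{v})).ord = (Cardinal.aleph 2).ord := by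
  rw [Cardinal.lift_ord, Cardinal.lift_aleph, Ordinal.lift_ofNat]

lemma lift_aleph_one :
    Cardinal.lift.{w} (Cardinal.aleph (1 : Ordinal.{v})) = Cardinal.aleph 1 := by
  rw [Cardinal.lift_aleph, Ordinal.lift_one]

lemma trf_ex_one {o : Ordinal.{v}} (h : o < (Cardinal.aleph 1).ord) :
    ∃ p : Ordinal.{w}, Ordinal.lift.{v} p = Ordinal.lift.{w} o := by
  apply Ordinal.mem_range_lift_of_le (a := (Cardinal.aleph 1).ord)
  rw [lift_ord_aleph_one.{w,v}, ← lift_ord_aleph_one.{v,w}]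
  exact Ordinal.lift_le.mpr h.le

lemma trf_ex_two {o : Ordinal.{v}} (h : o < (Cardinal.aleph 2).ord) :
    ∃ p : Ordinal.{w}, Ordinal.lift.{v} p = Ordinal.lift.{w} o := by
  apply Ordinal.mem_range_lift_of_le (a := (Cardinal.aleph 2).ord)
  rw [lift_ord_aleph_two.{w,v}, ← lift_ord_aleph_two.{v,w}]
  exact Ordinal.lift_le.mpr h.le

lemma trf_lt_one {o : Ordinal.{v}} (h : o < (Cardinal.aleph 1).ord) :
    trf.{v, w} o < (Cardinal.aleph 1).ord := by
  have h1 := trf_lift (trf_ex_one h)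
  rw [← Ordinal.lift_lt.{v}, h1, lift_ord_aleph_one.{w,v}, ← lift_ord_aleph_one.{v,w}]
  exact Ordinal.lift_lt.mpr h

lemma trf_lt_two {o : Ordinal.{v}} (h : o < (Cardinal.aleph 2).ord) :
    trf.{v, w} o < (Cardinal.aleph 2).ord := by
  have h1 := trf_lift (trf_ex_two h)
  rw [← Ordinal.lift_lt.{v}, h1, lift_ord_aleph_two.{w,v}, ← lift_ord_aleph_two.{v,w}]
  exact Ordinal.lift_lt.mpr h

lemma trf_trf {o : Ordinal.{v}}
    (h : ∃ p : Ordinal.{w}, Ordinal.lift.{v} p = Ordinal.lift.{w} o) :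
    trf.{w, v} (trf.{v, w} o) = o := by
  have h1 := trf_lift h
  have h2 : ∃ q : Ordinal.{v}, Ordinal.lift.{w} q = Ordinal.lift.{v} (trf.{v, w} o) :=
    ⟨o, h1.symm⟩
  have h3 := trf_lift h2
  rw [h1] at h3
  exact Ordinal.lift_inj.mp h3

universe a b c d

lemma hap_transfer
    (hap : ∀ f : Ordinal.{a} → Set Ordinal.{b},
      (∀ γ < (Cardinal.aleph 2).ord, f γ ⊆ Set.Iio (Cardinal.aleph 1).ord ∧
        #↥(f γ) = Cardinal.aleph 1) →
      (∀ γ < (Cardinal.aleph 2).ord, ∀ δ < (Cardinal.aleph 2).ord, γ ≠ δ →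
        #↥(f γ ∩ f δ) < Cardinal.aleph 1) →
      ∀ A ⊆ Set.Iio (Cardinal.aleph 2).ord, ∃ x ⊆ Set.Iio (Cardinal.aleph 1).ord,
        ∀ γ < (Cardinal.aleph 2).ord, (#↥(f γ ∩ x) = Cardinal.aleph 1 ↔ γ ∈ A))
    (e : Ordinal.{c} → Set Ordinal.{d})
    (he : ∀ γ < (Cardinal.aleph 2).ord, e γ ⊆ Set.Iio (Cardinal.aleph 1).ord ∧
      #↥(e γ) = Cardinal.aleph 1)
    (had : ∀ γ < (Cardinal.aleph 2).ord, ∀ δ < (Cardinal.aleph 2).ord, γ ≠ δ →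
      #↥(e γ ∩ e δ) < Cardinal.aleph 1) :
    ∀ A ⊆ Set.Iio (Cardinal.aleph 2).ord, ∃ x ⊆ Set.Iio (Cardinal.aleph 1).ord,
      ∀ γ < (Cardinal.aleph 2).ord, (#↥(e γ ∩ x) = Cardinal.aleph 1 ↔ γ ∈ A) := by
  intro A hA
  have hinj : Set.InjOn (trf.{d, b}) (Set.Iio (Cardinal.aleph 1).ord) := by
    intro p hp q hq hpq
    rw [← trf_trf (trf_ex_one hp), hpq, trf_trf (trf_ex_one hq)]
  have hcard : ∀ s : Set Ordinal.{d}, s ⊆ Set.Iio (Cardinal.aleph 1).ord →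
      (#↥(trf.{d, b} '' s) = Cardinal.aleph 1 ↔ #↥s = Cardinal.aleph 1) ∧
      (#↥(trf.{d, b} '' s) < Cardinal.aleph 1 ↔ #↥s < Cardinal.aleph 1) := by
    intro s hs
    have h1 : Cardinal.lift.{d + 1} #↥(trf.{d, b} '' s) = Cardinal.lift.{b + 1} #↥s :=
      Cardinal.mk_image_eq_of_injOn_lift _ _ (hinj.mono hs)
    have l1 : Cardinal.lift.{d + 1} (Cardinal.aleph 1 : Cardinal.{b + 1})
        = Cardinal.aleph 1 := lift_aleph_one
    have l2 : Cardinal.lift.{b + 1} (Cardinal.aleph 1 : Cardinal.{d + 1})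
        = Cardinal.aleph 1 := lift_aleph_one
    constructor
    · constructor
      · intro h2
        have h3 : Cardinal.lift.{b + 1} #↥s = Cardinal.lift.{b + 1} (Cardinal.aleph 1) := by
          rw [l2, ← h1, h2, l1]
        exact Cardinal.lift_inj.mp h3
      · intro h2
        have h3 : Cardinal.lift.{d + 1} #↥(trf.{d, b} '' s)
            = Cardinal.lift.{d + 1} (Cardinal.aleph 1) := by
          rw [l1, h1, h2, l2]
        exact Cardinal.lift_inj.mp h3
    · constructor
      · intro h2
        have h3 := Cardinal.lift_lt.{b + 1, d + 1}.mpr h2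
        rw [h1, l1, ← l2] at h3
        exact Cardinal.lift_lt.mp h3
      · intro h2
        have h3 := Cardinal.lift_lt.{d + 1, b + 1}.mpr h2
        rw [← h1, l2, ← l1] at h3
        exact Cardinal.lift_lt.mp h3
  set f : Ordinal.{a} → Set Ordinal.{b} :=
    fun δ => trf.{d, b} '' e (trf.{a, c} δ) with hf
  have hf1 : ∀ δ < (Cardinal.aleph 2).ord, f δ ⊆ Set.Iio (Cardinal.aleph 1).ord ∧
      #↥(f δ) = Cardinal.aleph 1 := by
    intro δ hδ
    obtain ⟨hsub, hcardeq⟩ := he _ (trf_lt_two hδ)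
    refine ⟨?_, ((hcard _ hsub).1).mpr hcardeq⟩
    rintro q ⟨p, hp, rfl⟩
    exact trf_lt_one (hsub hp)
  have hf2 : ∀ δ < (Cardinal.aleph 2).ord, ∀ δ' < (Cardinal.aleph 2).ord, δ ≠ δ' →
      #↥(f δ ∩ f δ') < Cardinal.aleph 1 := by
    intro δ hδ δ' hδ' hne
    have h1 : f δ ∩ f δ' = trf.{d, b} '' (e (trf.{a, c} δ) ∩ e (trf.{a, c} δ')) :=
      (hinj.image_inter (he _ (trf_lt_two hδ)).1 (he _ (trf_lt_two hδ')).1).symm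
    rw [h1]
    refine ((hcard _ fun p hp => (he _ (trf_lt_two hδ)).1 hp.1).2).mpr
      (had _ (trf_lt_two hδ) _ (trf_lt_two hδ') ?_)
    intro hEq
    apply hne
    rw [← trf_trf (trf_ex_two hδ), hEq, trf_trf (trf_ex_two hδ')]
  obtain ⟨x', hx'sub, hx'⟩ := hap f hf1 hf2
    {δ | δ < (Cardinal.aleph 2).ord ∧ trf.{a, c} δ ∈ A} (fun δ hδ => hδ.1)
  refine ⟨{p | p < (Cardinal.aleph 1).ord ∧ trf.{d, b} p ∈ x'}, fun p hp => hp.1, ?_⟩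
  intro γ hγ
  have hδ : trf.{c, a} γ < (Cardinal.aleph 2).ord := trf_lt_two hγ
  have hback : trf.{a, c} (trf.{c, a} γ) = γ := trf_trf (trf_ex_two hγ)
  have him : trf.{d, b} '' (e γ ∩ {p | p < (Cardinal.aleph 1).ord ∧ trf.{d, b} p ∈ x'})
      = f (trf.{c, a} γ) ∩ x' := by
    rw [hf]
    simp only [hback]
    ext q
    constructor
    · rintro ⟨p, ⟨hpe, -, hpx⟩, rfl⟩
      exact ⟨Set.mem_image_of_mem _ hpe, hpx⟩
    · rintro ⟨⟨p, hpe, rfl⟩, hqx⟩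
      exact ⟨p, ⟨hpe, (he γ hγ).1 hpe, hqx⟩, rfl⟩
  have hc2 := (hcard (e γ ∩ {p | p < (Cardinal.aleph 1).ord ∧ trf.{d, b} p ∈ x'})
    (fun p hp => hp.2.1)).1
  rw [him] at hc2
  refine (hc2.symm.trans ((hx' _ hδ).trans ?_))
  constructor
  · intro h2
    rw [← hback]
    exact h2.2
  · intro h2
    exact ⟨hδ, by rw [hback]; exact h2⟩


universe m n

lemma ideal_small_union {I : Set (Set Ordinal.{m})}
    (hcomplete : ∀ S : Set (Set Ordinal.{m}), S ⊆ I → #↥S < Cardinal.aleph 2 → ⋃₀ S ∈ I)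
    (g : Ordinal.{n} → Set Ordinal.{m})
    (hg : ∀ η < (Cardinal.aleph 1).ord, g η ∈ I) :
    ⋃₀ (g '' Set.Iio (Cardinal.aleph 1).ord) ∈ I := by
  refine hcomplete _ ?_ ?_
  · rintro t ⟨η, hη, rfl⟩
    exact hg η hη
  · have h1 : Cardinal.lift.{n + 1} #↥(g '' Set.Iio (Cardinal.aleph 1).ord)
        ≤ Cardinal.lift.{m + 1} #↥(Set.Iio ((Cardinal.aleph 1).ord : Ordinal.{n})) :=
      Cardinal.mk_image_le_lift
    rw [Ordinal.mk_Iio_ordinal, Cardinal.card_ord, Cardinal.lift_lift,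
      Cardinal.lift_aleph, Ordinal.lift_one] at h1
    have h2 : Cardinal.lift.{n + 1} #↥(g '' Set.Iio (Cardinal.aleph 1).ord)
        < Cardinal.lift.{n + 1} (Cardinal.aleph (2 : Ordinal.{m + 1})) := by
      refine lt_of_le_of_lt h1 ?_
      rw [Cardinal.lift_aleph, Ordinal.lift_ofNat]
      exact Cardinal.aleph_lt_aleph.mpr one_lt_two
    exact Cardinal.lift_lt.mp h2

/-- Lemma: assume `ap_{ℵ₁} > ℵ₂` (i.e. every pair `(A, E)` with `E` an
almost disjoint family of `ω₂`-many `ω₁`-sized subsets of `ω₁` and `A ⊆ ω₂` is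
depictable), `I` is an `ℵ₂`-complete ideal over `ω₂`, `P(ω₂)/I` is not `θ`-dense, and
`{A_i : i ∈ ι}` (with `#ι = θ`) is a family of `I`-positive sets.  Then, for a fixed
almost disjoint family `{e_γ : γ < ω₂} ⊆ [ω₁]^{ω₁}`, there exist `x ⊆ ω₁` and
`η < ω₁` with `F^η_x ∈ I⁺` and, for every `i`, some `ζ < ω₁` with
`E^η_{x ∩ ζ} ∩ A_i ∈ I⁺`. -/
theorem lemma_Fset_positive {ι : Type} (θ : Cardinal) (hθ : #ι = θ)
    -- ap_{ℵ₁} > ℵ₂ : every subset of ω₂ is depictable w.r.t. every a.d. family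
    (hap : ∀ f : Ordinal → Set Ordinal,
      (∀ γ < (Cardinal.aleph 2).ord, f γ ⊆ Set.Iio (Cardinal.aleph 1).ord ∧
        #↥(f γ) = Cardinal.aleph 1) →
      (∀ γ < (Cardinal.aleph 2).ord, ∀ δ < (Cardinal.aleph 2).ord, γ ≠ δ →
        #↥(f γ ∩ f δ) < Cardinal.aleph 1) →
      ∀ A ⊆ Set.Iio (Cardinal.aleph 2).ord, ∃ x ⊆ Set.Iio (Cardinal.aleph 1).ord,
        ∀ γ < (Cardinal.aleph 2).ord, (#↥(f γ ∩ x) = Cardinal.aleph 1 ↔ γ ∈ A))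
    (I : Set (Set Ordinal))
    (hI : ∀ s ∈ I, s ⊆ Set.Iio (Cardinal.aleph 2).ord)
    (hdown : ∀ s ∈ I, ∀ t ⊆ s, t ∈ I)
    (hcomplete : ∀ S : Set (Set Ordinal), S ⊆ I → #↥S < Cardinal.aleph 2 → ⋃₀ S ∈ I)
    -- P(ω₂)/I is not θ-dense
    (hnotdense : ¬ ∃ famD : ι → Set Ordinal,
      (∀ i, famD i ⊆ Set.Iio (Cardinal.aleph 2).ord ∧ famD i ∉ I) ∧
      ∀ B ⊆ Set.Iio (Cardinal.aleph 2).ord, B ∉ I → ∃ i, famD i \ B ∈ I)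
    (A : ι → Set Ordinal)
    (hA : ∀ i, A i ⊆ Set.Iio (Cardinal.aleph 2).ord ∧ A i ∉ I)
    -- the fixed almost disjoint family
    (e : Ordinal → Set Ordinal)
    (he : ∀ γ < (Cardinal.aleph 2).ord, e γ ⊆ Set.Iio (Cardinal.aleph 1).ord ∧
      #↥(e γ) = Cardinal.aleph 1)
    (had : ∀ γ < (Cardinal.aleph 2).ord, ∀ δ < (Cardinal.aleph 2).ord, γ ≠ δ →
      #↥(e γ ∩ e δ) < Cardinal.aleph 1) :
    ∃ x ⊆ Set.Iio (Cardinal.aleph 1).ord, ∃ η < (Cardinal.aleph 1).ord,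
      Fset e η x ∉ I ∧
      ∀ i : ι, ∃ ζ < (Cardinal.aleph 1).ord,
        Eset e η (x ∩ Set.Iio ζ) ∩ A i ∉ I := by
  -- Step 1 : get B from non-density
  have key : ∃ B, B ⊆ Set.Iio (Cardinal.aleph 2).ord ∧ B ∉ I ∧ ∀ i, A i \ B ∉ I := by
    by_contra h
    push_neg at h
    refine hnotdense ⟨A, hA, fun B hB1 hB2 => ?_⟩
    exact h B hB1 hB2
  obtain ⟨B, hBsub, hBpos, hBi⟩ := key
  -- Step 2 : depict the complement of B
  obtain ⟨x, hxsub, hx⟩ := hap_transfer hap e he had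
    (Set.Iio (Cardinal.aleph 2).ord \ B) Set.diff_subset
  refine ⟨x, hxsub, ?_⟩
  -- for γ ∈ B the intersection is small
  have hBsmall : ∀ γ ∈ B, otp (e γ ∩ x) < (Cardinal.aleph 1).ord := by
    intro γ hγ
    have hγ2 : γ < (Cardinal.aleph 2).ord := hBsub hγ
    have hne : #↥(e γ ∩ x) ≠ Cardinal.aleph 1 := by
      intro hcc
      exact ((hx γ hγ2).mp hcc).2 hγ
    have hle : #↥(e γ ∩ x) ≤ Cardinal.aleph 1 := by
      rw [← (he γ hγ2).2]
      exact Cardinal.mk_le_mk_of_subset Set.inter_subset_left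
    rw [Cardinal.lt_ord, card_otp]
    exact lt_of_le_of_ne hle hne
  -- Step 3 : find η
  have hη : ∃ η < (Cardinal.aleph 1).ord,
      {γ ∈ B | otp (e γ ∩ x) < η} ∉ I := by
    by_contra h
    push_neg at h
    apply hBpos
    refine hdown _ (ideal_small_union hcomplete (fun η => {γ ∈ B | otp (e γ ∩ x) < η}) h) B ?_
    intro γ hγ
    refine ⟨_, ⟨otp (e γ ∩ x) + 1, ?_, rfl⟩, hγ, ?_⟩
    · rw [Ordinal.add_one_eq_succ]
      exact (Cardinal.isSuccLimit_ord (Cardinal.aleph0_le_aleph 1)).succ_lt (hBsmall γ hγ)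
    · rw [Ordinal.add_one_eq_succ]
      exact Order.lt_succ _
  obtain ⟨η, hη1, hη2⟩ := hη
  refine ⟨η, hη1, ?_, ?_⟩
  · -- Fset positive
    intro hF
    refine hη2 (hdown _ hF _ ?_)
    intro γ hγ
    exact ⟨hBsub hγ.1, not_le.mpr hγ.2⟩
  · -- Step 4 : for each i find ζ
    intro i
    by_contra h
    push_neg at h
    apply hBi i
    refine hdown _ (ideal_small_union hcomplete
      (fun ζ => Eset e η (x ∩ Set.Iio ζ) ∩ A i) ?_) (A i \ B) ?_
    · intro ζ hζ
      exact h ζ hζ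
    · intro γ hγ
      have hγ2 : γ < (Cardinal.aleph 2).ord := (hA i).1 hγ.1
      have hcard : #↥(e γ ∩ x) = Cardinal.aleph 1 :=
        (hx γ hγ2).mpr ⟨hγ2, hγ.2⟩
      obtain ⟨ζ, hζ1, hζ2⟩ := otp_exists_seg
        (fun a ha => (he γ hγ2).1 ha.1) hcard hη1
      refine ⟨_, ⟨ζ, hζ1, rfl⟩, ⟨hγ2, ?_⟩, hγ.1⟩
      rwa [← Set.inter_assoc]
end

section
/- If there exists a uniform σ-complete (ℵ₂, ℵ₁, ℵ₀)-saturated ideal over ω₁, then the polarized partition relation (ω₂, ω₁) → (ω, ω)^{1,1}_ω holds: for every coloring c : ω₂ × ω₁ → ω there are A ⊆ ω₂ and B ⊆ ω₁, both infinite (of order type ω), such that c is constant on A × B. -/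
open Cardinal Set

universe u

/-- A countable infinite subset of a set has cardinality `ℵ₀` -/
lemma mk_eq_aleph0_of_countable_infinite {γ : Type u} {s : Set γ}
    (hc : s.Countable) (hi : s.Infinite) : #↥s = Cardinal.aleph0 := by
  have := hc.to_subtype
  have := hi.to_subtype
  exact le_antisymm Cardinal.mk_le_aleph0 (Cardinal.aleph0_le_mk _)

/-- if there is a uniform σ-complete `(ℵ₂, ℵ₁, ℵ₀)`-saturated ideal
over `ω₁`, then `(ω₂, ω₁) → (ω, ω)^{1,1}_ω`: every coloring `c : ω₂ × ω₁ → ω` has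
infinite `A ⊆ ω₂`, `B ⊆ ω₁` with `c` constant on `A × B`.  Here `β` has size `ℵ₂`
and `α` has size `ℵ₁`. -/
theorem polarized_of_weakly_laver {α β : Type u}
    (hα : #α = Cardinal.aleph 1) (hβ : #β = Cardinal.aleph 2)
    (hJ : ∃ J : Set (Set α),
      -- proper ideal, downward closed
      (Set.univ ∉ J) ∧ (∀ s ∈ J, ∀ t ⊆ s, t ∈ J) ∧
      -- uniform: all sets of size < ℵ₁ are in J
      (∀ s : Set α, #↥s < Cardinal.aleph 1 → s ∈ J) ∧
      -- σ-complete: countable unions of members of J lie in J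
      (∀ S : Set (Set α), S ⊆ J → S.Countable → ⋃₀ S ∈ J) ∧
      -- (ℵ₂, ℵ₁, ℵ₀)-saturated
      (∀ A : β → Set α, (∀ b, A b ∉ J) →
        ∃ g : α → β, Function.Injective g ∧
          ∀ C : Set α, C.Countable → (⋂ i ∈ C, A (g i)) ∉ J)) :
    ∀ c : β → α → ℕ, ∃ A : Set β, ∃ B : Set α,
      #↥A = Cardinal.aleph0 ∧ #↥B = Cardinal.aleph0 ∧
      ∃ m : ℕ, ∀ a ∈ A, ∀ b ∈ B, c a b = m := by
  obtain ⟨J, hproper, _hdown, hunif, hsigma, hsat⟩ := hJ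
  intro c
  -- for each b, some color class is J-positive
  have hn : ∀ b : β, ∃ k : ℕ, (c b) ⁻¹' {k} ∉ J := by
    intro b
    by_contra h
    push_neg at h
    have hU : ⋃₀ (Set.range fun k : ℕ => (c b) ⁻¹' {k}) ∈ J :=
      hsigma _ (by rintro s ⟨k, rfl⟩; exact h k) (Set.countable_range _)
    have : ⋃₀ (Set.range fun k : ℕ => (c b) ⁻¹' {k}) = Set.univ := by
      ext a
      simp only [Set.sUnion_range, Set.mem_iUnion, Set.mem_preimage,
        Set.mem_singleton_iff, Set.mem_univ, iff_true]
      exact ⟨c b a, rfl⟩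
    rw [this] at hU
    exact hproper hU
  choose n hnJ using hn
  obtain ⟨g, hg, hC⟩ := hsat (fun b => (c b) ⁻¹' {n b}) hnJ
  -- pigeonhole: some fiber of `fun i => n (g i)` is infinite
  have hαu : ¬ (Set.univ : Set α).Countable := by
    intro h
    have : #α ≤ Cardinal.aleph0 := by
      have := h.to_subtype
      simpa using (Cardinal.mk_le_aleph0 : #(Set.univ : Set α) ≤ _)
    rw [hα] at this
    exact absurd (lt_of_lt_of_le (Cardinal.aleph0_lt_aleph_one) this) (lt_irrefl _)
  have hfib : ∃ m : ℕ, ((fun i => n (g i)) ⁻¹' {m}).Infinite := by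
    by_contra h
    push_neg at h
    apply hαu
    have : (Set.univ : Set α) = ⋃ m : ℕ, (fun i => n (g i)) ⁻¹' {m} := by
      ext a; simp only [Set.mem_univ, Set.mem_iUnion, Set.mem_preimage,
        Set.mem_singleton_iff, true_iff]
      exact ⟨n (g a), rfl⟩
    rw [this]
    exact Set.countable_iUnion fun m => (h m).countable
  obtain ⟨m, hm⟩ := hfib
  -- countable infinite subset D of the fiber
  have := hm.to_subtype
  let e0 : ℕ ↪ ↥((fun i => n (g i)) ⁻¹' {m}) := Infinite.natEmbedding _
  let e : ℕ → α := fun k => (e0 k : α)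
  have he : Function.Injective e := fun i j h => e0.injective (Subtype.ext h)
  have hem : ∀ k, n (g (e k)) = m := fun k => (e0 k).2
  set D : Set α := Set.range e with hD
  -- the intersection over D is J-positive, hence infinite
  set I : Set α := ⋂ i ∈ D, (c (g i)) ⁻¹' {n (g i)} with hI
  have hIJ : I ∉ J := hC D (Set.countable_range _)
  have hIcard : Cardinal.aleph 1 ≤ #↥I := by
    by_contra h
    push_neg at h
    exact hIJ (hunif I h)
  have hIinf : I.Infinite := by
    rw [← Set.infinite_coe_iff]
    rw [← Cardinal.aleph0_le_mk_iff]
    exact le_trans Cardinal.aleph0_lt_aleph_one.le hIcard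
  have := hIinf.to_subtype
  let f0 : ℕ ↪ ↥I := Infinite.natEmbedding _
  let f : ℕ → α := fun k => (f0 k : α)
  have hf : Function.Injective f := fun i j h => f0.injective (Subtype.ext h)
  refine ⟨Set.range (g ∘ e), Set.range f, ?_, ?_, m, ?_⟩
  · exact mk_eq_aleph0_of_countable_infinite (Set.countable_range _)
      (Set.infinite_range_of_injective (hg.comp he))
  · exact mk_eq_aleph0_of_countable_infinite (Set.countable_range _)
      (Set.infinite_range_of_injective hf)
  · rintro a ⟨k, rfl⟩ b ⟨j, rfl⟩
    have hbI : f j ∈ I := (f0 j).2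
    rw [hI] at hbI
    have : f j ∈ (c (g (e k))) ⁻¹' {n (g (e k))} := by
      have hek : e k ∈ D := ⟨k, rfl⟩
      exact Set.mem_iInter₂.mp hbI (e k) hek
    simp only [Set.mem_preimage, Set.mem_singleton_iff] at this
    simpa [Function.comp, hem k] using this
end
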